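/- For every continuous function g : [0,1] → ℝ and every n ≥ 1, sup_{x∈[0,1]} |B_n(g;x) − g(x)| ≤ (3/2) ω_g(1/√n), where ω_g is the modulus of continuity of g. -/

import Mathlib

noncomputable def bern (n k : ℕ) (x : ℝ) : ℝ :=
  (n.choose k : ℝ) * x ^ k * (1 - x) ^ (n - k)

noncomputable def bernOp (n : ℕ) (f : ℝ → ℝ) (x : ℝ) : ℝ :=
  ∑ k ∈ Finset.range (n + 1), f ((k : ℝ) / (n : ℝ)) * bern n k x

noncomputable def modCont (f : ℝ → ℝ) (δ : ℝ) : ℝ :=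
  sSup {r : ℝ | ∃ x ∈ Set.Icc (0 : ℝ) 1, ∃ y ∈ Set.Icc (0 : ℝ) 1, |x - y| ≤ δ ∧ r = |f x - f y|}


/-!
Write `B_n g x - g x = ∑ₖ (g (k/n) - g x) bₙₖ(x)`. Cutting a segment of length `t` into `⌈t/δ⌉`
pieces of length at most `δ` gives `|g u - g v| ≤ (1 + |u - v|/δ) ω(δ)`, so the error is at most
`ω(δ) (1 + δ⁻¹ ∑ₖ |k/n - x| bₙₖ(x))`. By Cauchy–Schwarz this first absolute moment is at most the
square root of the variance `x(1-x)/n ≤ 1/(4n)`, and `δ = 1/√n` turns the bracket into `3/2`.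
-/

open Finset

lemma bern_nonneg (n k : ℕ) {x : ℝ} (hx : x ∈ Set.Icc (0 : ℝ) 1) : 0 ≤ bern n k x := by
  obtain ⟨hx0, hx1⟩ := hx
  have : 0 ≤ 1 - x := sub_nonneg.mpr hx1
  unfold bern
  positivity

lemma sum_bern (n : ℕ) (x : ℝ) : ∑ k ∈ range (n + 1), bern n k x = 1 := by
  simpa [bern, mul_comm, mul_left_comm, mul_assoc] using (add_pow x (1 - x) n).symm

lemma sum_sq_sub_mul_bern {n : ℕ} (hn : n ≠ 0) {x : ℝ} (hx : x ∈ Set.Icc (0 : ℝ) 1) :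
    ∑ k ∈ range (n + 1), ((k : ℝ) / n - x) ^ 2 * bern n k x = x * (1 - x) / n := by
  rw [← bernstein.variance hn ⟨x, hx⟩, ← Fin.sum_univ_eq_sum_range]
  refine sum_congr rfl fun k _ => ?_
  simp only [bernstein_apply, bernstein.z, bern]
  ring

lemma sum_abs_sub_mul_bern_le {n : ℕ} (hn : n ≠ 0) {x : ℝ} (hx : x ∈ Set.Icc (0 : ℝ) 1) :
    ∑ k ∈ range (n + 1), |(k : ℝ) / n - x| * bern n k x ≤ 1 / (2 * √n) := by
  have hb : ∀ k ∈ range (n + 1), 0 ≤ bern n k x := fun k _ => bern_nonneg n k hx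
  have hCS : (∑ k ∈ range (n + 1), |(k : ℝ) / n - x| * bern n k x) ^ 2 ≤ x * (1 - x) / n :=
    calc _ ≤ (∑ k ∈ range (n + 1), bern n k x) *
          ∑ k ∈ range (n + 1), ((k : ℝ) / n - x) ^ 2 * bern n k x :=
          sum_sq_le_sum_mul_sum_of_sq_le_mul _ hb (fun k hk => mul_nonneg (sq_nonneg _) (hb k hk))
            fun k _ => by rw [mul_pow, sq_abs]; nlinarith
      _ = x * (1 - x) / n := by rw [sum_bern, one_mul, sum_sq_sub_mul_bern hn hx]
  have hquarter : x * (1 - x) / n ≤ (1 / (2 * √n)) ^ 2 := by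
    rw [div_pow, mul_pow, Real.sq_sqrt n.cast_nonneg, one_pow,
      div_le_div_iff₀ (by positivity) (by positivity)]
    nlinarith [sq_nonneg (2 * x - 1)]
  exact (pow_le_pow_iff_left₀ (sum_nonneg fun k hk => mul_nonneg (abs_nonneg _) (hb k hk))
    (by positivity) two_ne_zero).mp (hCS.trans hquarter)

section ModulusOfContinuity

variable {g : ℝ → ℝ} (hg : ContinuousOn g (Set.Icc 0 1))
include hg

lemma bddAbove_modCont_set (δ : ℝ) :
    BddAbove {r : ℝ | ∃ x ∈ Set.Icc (0 : ℝ) 1, ∃ y ∈ Set.Icc (0 : ℝ) 1,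
      |x - y| ≤ δ ∧ r = |g x - g y|} := by
  obtain ⟨C, hC⟩ := isCompact_Icc.exists_bound_of_continuousOn hg
  refine ⟨C + C, ?_⟩
  rintro r ⟨x, hx, y, hy, -, rfl⟩
  exact (abs_sub _ _).trans (add_le_add (hC x hx) (hC y hy))

lemma abs_sub_le_modCont {δ x y : ℝ} (hx : x ∈ Set.Icc (0 : ℝ) 1) (hy : y ∈ Set.Icc (0 : ℝ) 1)
    (hxy : |x - y| ≤ δ) : |g x - g y| ≤ modCont g δ :=
  le_csSup (bddAbove_modCont_set hg δ) ⟨x, hx, y, hy, hxy, rfl⟩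

lemma modCont_nonneg {δ : ℝ} (hδ : 0 ≤ δ) : 0 ≤ modCont g δ := by
  simpa using abs_sub_le_modCont hg (x := 0) (y := 0) (by simp) (by simp) (by simpa using hδ)

lemma abs_sub_le_nat_mul_modCont {δ x y : ℝ} {m : ℕ} (hx : x ∈ Set.Icc (0 : ℝ) 1)
    (hy : y ∈ Set.Icc (0 : ℝ) 1) (hxy : |x - y| ≤ m * δ) : |g x - g y| ≤ m * modCont g δ := by
  rcases Nat.eq_zero_or_pos m with rfl | hm
  · have : x = y := by simpa [sub_eq_zero] using hxy
    simp [this]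
  have hm' : (0 : ℝ) < m := by exact_mod_cast hm
  set z : ℕ → ℝ := fun i => x + ((i : ℝ) / m) * (y - x) with hz
  have hz_mem : ∀ i ≤ m, z i ∈ Set.Icc (0 : ℝ) 1 := fun i hi =>
    (convex_Icc 0 1).add_smul_sub_mem hx hy
      ⟨by positivity, div_le_one_of_le₀ (by exact_mod_cast hi) hm'.le⟩
  have hstep : ∀ i, |z (i + 1) - z i| ≤ δ := fun i => by
    have : z (i + 1) - z i = -(x - y) / m := by simp only [hz]; push_cast; field_simp; ring
    rw [this, abs_div, abs_neg, abs_of_pos hm', div_le_iff₀ hm']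
    linarith
  have hwalk : ∀ i ≤ m, |g (z i) - g x| ≤ i * modCont g δ := by
    intro i hi
    induction i with
    | zero => simp [hz]
    | succ i ih =>
      calc |g (z (i + 1)) - g x| ≤ |g (z (i + 1)) - g (z i)| + |g (z i) - g x| := abs_sub_le _ _ _
        _ ≤ modCont g δ + i * modCont g δ :=
          add_le_add (abs_sub_le_modCont hg (hz_mem _ hi) (hz_mem _ (by omega)) (hstep i))
            (ih (by omega))
        _ = (i + 1 : ℕ) * modCont g δ := by push_cast; ring
  have hzm : z m = y := by simp only [hz]; field_simp; ring
  simpa [hzm, abs_sub_comm] using hwalk m le_rfl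

lemma abs_sub_le_one_add_div_mul_modCont {δ x y : ℝ} (hx : x ∈ Set.Icc (0 : ℝ) 1)
    (hy : y ∈ Set.Icc (0 : ℝ) 1) (hδ : 0 < δ) :
    |g x - g y| ≤ (1 + |x - y| / δ) * modCont g δ := by
  have hratio : 0 ≤ |x - y| / δ := by positivity
  calc |g x - g y| ≤ ⌈|x - y| / δ⌉₊ * modCont g δ :=
        abs_sub_le_nat_mul_modCont hg hx hy ((div_le_iff₀ hδ).mp (Nat.le_ceil _))
    _ ≤ (1 + |x - y| / δ) * modCont g δ := by
        gcongr
        · exact modCont_nonneg hg hδ.le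
        · linarith [Nat.ceil_lt_add_one hratio]

end ModulusOfContinuity

lemma bernOp_sub_eq_sum (n : ℕ) (f : ℝ → ℝ) (x : ℝ) :
    bernOp n f x - f x = ∑ k ∈ range (n + 1), (f ((k : ℝ) / n) - f x) * bern n k x := by
  simp only [bernOp, sub_mul, sum_sub_distrib, ← mul_sum, sum_bern, mul_one]

lemma natCast_div_mem_Icc {k n : ℕ} (hk : k ≤ n) : (k : ℝ) / n ∈ Set.Icc (0 : ℝ) 1 :=
  ⟨by positivity, div_le_one_of_le₀ (by exact_mod_cast hk) n.cast_nonneg⟩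

lemma abs_bernOp_sub_le {g : ℝ → ℝ} (hg : ContinuousOn g (Set.Icc 0 1)) {n : ℕ} (hn : n ≠ 0)
    {x δ : ℝ} (hx : x ∈ Set.Icc (0 : ℝ) 1) (hδ : 0 < δ) :
    |bernOp n g x - g x| ≤ (1 + 1 / (2 * √n) / δ) * modCont g δ := by
  have hb : ∀ k ∈ range (n + 1), 0 ≤ bern n k x := fun k _ => bern_nonneg n k hx
  have hω := modCont_nonneg hg hδ.le
  calc |bernOp n g x - g x|
      ≤ ∑ k ∈ range (n + 1), |g ((k : ℝ) / n) - g x| * bern n k x := by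
        rw [bernOp_sub_eq_sum]
        refine (abs_sum_le_sum_abs _ _).trans_eq (sum_congr rfl fun k hk => ?_)
        rw [abs_mul, abs_of_nonneg (hb k hk)]
    _ ≤ ∑ k ∈ range (n + 1), (1 + |(k : ℝ) / n - x| / δ) * modCont g δ * bern n k x := by
        refine sum_le_sum fun k hk => mul_le_mul_of_nonneg_right ?_ (hb k hk)
        exact abs_sub_le_one_add_div_mul_modCont hg
          (natCast_div_mem_Icc (Nat.lt_succ_iff.mp (mem_range.mp hk))) hx hδ
    _ = (1 + (∑ k ∈ range (n + 1), |(k : ℝ) / n - x| * bern n k x) / δ) * modCont g δ := by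
        have hsplit : ∀ k : ℕ, (1 + |(k : ℝ) / n - x| / δ) * modCont g δ * bern n k x =
            modCont g δ * bern n k x + |(k : ℝ) / n - x| * bern n k x / δ * modCont g δ :=
          fun k => by ring
        simp only [hsplit, sum_add_distrib, ← mul_sum, sum_bern, ← sum_div, ← sum_mul]
        ring
    _ ≤ (1 + 1 / (2 * √n) / δ) * modCont g δ := by
        gcongr
        exact sum_abs_sub_mul_bern_le hn hx

theorem stmt10 (g : ℝ → ℝ) (hg : ContinuousOn g (Set.Icc (0 : ℝ) 1))
    (n : ℕ) (hn : 1 ≤ n) :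
    (⨆ x : Set.Icc (0 : ℝ) 1, |bernOp n g x - g x|)
      ≤ (3 / 2) * modCont g (1 / Real.sqrt n) := by
  have hsqrt : 0 < √(n : ℝ) := Real.sqrt_pos.mpr (by exact_mod_cast hn)
  have hδ : 0 < 1 / √(n : ℝ) := by positivity
  refine Real.iSup_le (fun x => ?_) (mul_nonneg (by norm_num) (modCont_nonneg hg hδ.le))
  calc |bernOp n g x - g x| ≤ (1 + 1 / (2 * √n) / (1 / √n)) * modCont g (1 / √n) :=
        abs_bernOp_sub_le hg (Nat.one_le_iff_ne_zero.mp hn) x.2 hδ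
    _ = 3 / 2 * modCont g (1 / √n) := by field_simp; ring
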